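/- arXiv:2003.12370 — 6 statements merged into one kernel-verified Lean document; each statement's English description precedes it below -/
import Mathlib

section
/- Suppose (a_n)_{n≥2} is a sequence of nonnegative reals and 0 < s ≤ 1, satisfying a_2 ≤ s and a_n ≤ (s/(n-1))·(1 + ∑_{k=2}^{n-1} a_k) for all n ≥ 3. Then a_n ≤ (s)_{n-1}/(n-1)! for all n ≥ 2, where (s)_m = s(s+1)⋯(s+m-1) is the Pochhammer symbol. -/
/-!
The bound `b n = (s)_{n-1} / (n-1)!` satisfies the recursion with equality: by the Pascal-type
identity `(s+1)_{m+1}/(m+1)! = (s+1)_m/m! + (s)_{m+1}/(m+1)!` its partial sums telescope to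
`1 + ∑_{k=2}^{m+1} b k = (s+1)_m / m!`, and `(s)_{m+1} = s (s+1)_m`. Since `s/(n-1) ≥ 0`, the
recursive inequality is monotone in the earlier terms, so strong induction gives `a n ≤ b n`.
-/

open Polynomial Finset Nat

section ascPochhammerDivFactorial

variable {K : Type*} [Field K] [CharZero K]

noncomputable def ascPochhammerDivFactorial (s : K) (m : ℕ) : K :=
  (ascPochhammer K m).eval s / m !

theorem ascPochhammerDivFactorial_zero (s : K) : ascPochhammerDivFactorial s 0 = 1 := by
  simp [ascPochhammerDivFactorial]

theorem ascPochhammerDivFactorial_succ (s : K) (m : ℕ) :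
    ascPochhammerDivFactorial s (m + 1) = s / (m + 1) * ascPochhammerDivFactorial (s + 1) m := by
  simp only [ascPochhammerDivFactorial, ascPochhammer_succ_left, eval_mul, eval_comp, eval_add,
    eval_X, eval_one, factorial_succ, cast_mul, cast_succ]
  field_simp

theorem ascPochhammerDivFactorial_add_one_succ (s : K) (m : ℕ) :
    ascPochhammerDivFactorial (s + 1) (m + 1) =
      ascPochhammerDivFactorial (s + 1) m + ascPochhammerDivFactorial s (m + 1) := by
  rw [ascPochhammerDivFactorial_succ s]
  simp only [ascPochhammerDivFactorial, ascPochhammer_succ_eval, factorial_succ, cast_mul,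
    cast_succ]
  field_simp
  ring

theorem one_add_sum_ascPochhammerDivFactorial (s : K) (m : ℕ) :
    1 + ∑ k ∈ Icc 2 (m + 1), ascPochhammerDivFactorial s (k - 1) =
      ascPochhammerDivFactorial (s + 1) m := by
  induction m with
  | zero => simp [ascPochhammerDivFactorial_zero]
  | succ m ih =>
    rw [sum_Icc_succ_top (by omega), ← add_assoc, ih, ascPochhammerDivFactorial_add_one_succ]
    rfl

theorem ascPochhammerDivFactorial_pred_eq (s : K) {n : ℕ} (hn : 2 ≤ n) :
    ascPochhammerDivFactorial s (n - 1) =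
      s / ((n : K) - 1) * (1 + ∑ k ∈ Icc 2 (n - 1), ascPochhammerDivFactorial s (k - 1)) := by
  obtain ⟨m, rfl⟩ := Nat.exists_eq_add_of_le' hn
  rw [show m + 2 - 1 = m + 1 by omega, one_add_sum_ascPochhammerDivFactorial,
    ascPochhammerDivFactorial_succ]
  push_cast
  ring_nf

end ascPochhammerDivFactorial

theorem le_of_le_mul_one_add_sum {a b c : ℕ → ℝ} (hc : ∀ n, 2 ≤ n → 0 ≤ c n)
    (ha : ∀ n, 2 ≤ n → a n ≤ c n * (1 + ∑ k ∈ Icc 2 (n - 1), a k))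
    (hb : ∀ n, 2 ≤ n → b n = c n * (1 + ∑ k ∈ Icc 2 (n - 1), b k)) :
    ∀ n, 2 ≤ n → a n ≤ b n := by
  intro n
  induction n using Nat.strong_induction_on with
  | _ n ih =>
    intro hn
    have hsum : ∑ k ∈ Icc 2 (n - 1), a k ≤ ∑ k ∈ Icc 2 (n - 1), b k :=
      sum_le_sum fun k hk => by
        obtain ⟨hk2, hkn⟩ := mem_Icc.mp hk
        exact ih k (by omega) hk2
    calc a n ≤ c n * (1 + ∑ k ∈ Icc 2 (n - 1), a k) := ha n hn
      _ ≤ c n * (1 + ∑ k ∈ Icc 2 (n - 1), b k) := by gcongr; exact hc n hn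
      _ = b n := (hb n hn).symm

theorem stmt_1_general (s : ℝ) (hs0 : 0 < s) (a : ℕ → ℝ)
    (h2 : a 2 ≤ s)
    (hrec : ∀ n, 3 ≤ n →
      a n ≤ s / ((n : ℝ) - 1) * (1 + ∑ k ∈ Finset.Icc 2 (n - 1), a k)) :
    ∀ n, 2 ≤ n → a n ≤ (ascPochhammer ℝ (n - 1)).eval s / (Nat.factorial (n - 1) : ℝ) := by
  have hc : ∀ n : ℕ, 2 ≤ n → 0 ≤ s / ((n : ℝ) - 1) := fun n hn => by
    have : (2 : ℝ) ≤ n := by exact_mod_cast hn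
    exact div_nonneg hs0.le (by linarith)
  have ha : ∀ n, 2 ≤ n → a n ≤ s / ((n : ℝ) - 1) * (1 + ∑ k ∈ Icc 2 (n - 1), a k) := by
    intro n hn
    rcases hn.eq_or_lt with rfl | hn3
    · norm_num [h2]
    · exact hrec n hn3
  exact le_of_le_mul_one_add_sum hc ha fun n hn => ascPochhammerDivFactorial_pred_eq s hn

/-- the recursive coefficient estimate. -/
theorem stmt_1 (s : ℝ) (hs0 : 0 < s) (hs1 : s ≤ 1) (a : ℕ → ℝ)
    (hpos : ∀ n, 2 ≤ n → 0 ≤ a n) (h2 : a 2 ≤ s)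
    (hrec : ∀ n, 3 ≤ n →
      a n ≤ s / ((n : ℝ) - 1) * (1 + ∑ k ∈ Finset.Icc 2 (n - 1), a k)) :
    ∀ n, 2 ≤ n → a n ≤ (ascPochhammer ℝ (n - 1)).eval s / (Nat.factorial (n - 1) : ℝ) :=
  stmt_1_general s hs0 a h2 hrec
end

section
/- Let h(z) = z + ∑_{n≥2} d_n z^n be analytic on the unit disk with h'(z) ≠ 0, and suppose 1 + z h''(z)/h'(z) = 1/(1-ω(z))^s where ω(z) = w_1 z + w_2 z² + ⋯ is a Schwarz function and 0 < s ≤ 1. Then d_2 = s w_1/2, d_3 = (s/6)(w_2 + ((3s+1)/2) w_1²), and d_4 = (s/12)(w_3 + ((5s+2)/2) w_1 w_2 + ((17s²+15s+4)/12) w_1³). -/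
/-!
Write `p = h'` and `G = (1 - ω)^(-s)`. The hypothesis says `(z p)' = p G`, so comparing
`n`-th derivatives at `0` with the Leibniz rule gives the triangular system
`(n + 1) p⁽ⁿ⁾(0) = ∑ᵢ (n choose i) p⁽ⁱ⁾(0) G⁽ⁿ⁻ⁱ⁾(0)`. The derivatives of `G` at `0` are obtained
the same way from the first-order equation `G' (1 - ω) = s ω' G`. Solving the system for
`n = 1, 2, 3` and using `p⁽ⁿ⁾(0) = (n + 1)! d_{n+1}`, `ω⁽ⁿ⁾(0) = n! w_n` gives the coefficients.
-/

open Filter Topology Complex FormalMultilinearSeries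
open scoped NNReal

theorem hasFPowerSeriesOnBall_ofScalars_of_eq_tsum {c : ℕ → ℂ} {f : ℂ → ℂ} {r : ℝ≥0}
    (hr : 0 < r) (hsum : ∀ z ∈ Metric.ball (0 : ℂ) r, Summable fun n => c n * z ^ n)
    (hf : ∀ z ∈ Metric.ball (0 : ℂ) r, f z = ∑' n, c n * z ^ n) :
    HasFPowerSeriesOnBall f (ofScalars ℂ c) 0 r where
  r_le := by
    refine ENNReal.le_of_forall_nnreal_lt fun t ht => ?_
    have ht : ((t : ℝ) : ℂ) ∈ Metric.ball (0 : ℂ) r := by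
      simpa [abs_of_nonneg t.coe_nonneg] using ht
    refine le_radius_of_summable_norm _ ((summable_norm_iff.mpr (hsum _ ht)).congr fun n => ?_)
    simp [abs_of_nonneg t.coe_nonneg]
  r_pos := by simpa using hr
  hasSum {y} hy := by
    have hy : y ∈ Metric.ball (0 : ℂ) r := by simpa using hy
    simpa [hf y hy, ofScalars_apply_eq, mul_comm] using (hsum y hy).hasSum

theorem HasFPowerSeriesAt.iteratedDeriv_eq_factorial_mul {𝕜 : Type*} [NontriviallyNormedField 𝕜]
    [CompleteSpace 𝕜] [CharZero 𝕜] {c : ℕ → 𝕜} {f : 𝕜 → 𝕜} {x : 𝕜}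
    (hf : HasFPowerSeriesAt f (ofScalars 𝕜 c) x) (n : ℕ) :
    iteratedDeriv n f x = n.factorial * c n := by
  have := congrFun (ofScalars_series_injective 𝕜 𝕜
    (hf.analyticAt.hasFPowerSeriesAt.eq_formalMultilinearSeries hf)) n
  rw [← this, mul_div_cancel₀ _ (Nat.cast_ne_zero.mpr n.factorial_ne_zero)]

theorem iteratedDeriv_succ_id_mul_zero {𝕜 : Type*} [NontriviallyNormedField 𝕜] {f : 𝕜 → 𝕜}
    {n : ℕ} (hf : ContDiffAt 𝕜 (n + 1) f 0) :
    iteratedDeriv (n + 1) (fun z => z * f z) 0 = (n + 1) * iteratedDeriv n f 0 := by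
  rw [iteratedDeriv_fun_mul contDiffAt_fun_id (by exact_mod_cast hf), Finset.sum_eq_single 1]
  · simp [iteratedDeriv_fun_id_zero]
  · intro i _ hi
    simp [iteratedDeriv_fun_id_zero, hi]
  · simp

theorem succ_mul_iteratedDeriv_eq_sum_of_add_id_mul_deriv {𝕜 : Type*}
    [NontriviallyNormedField 𝕜] [CompleteSpace 𝕜] {p G : 𝕜 → 𝕜}
    (hp : AnalyticAt 𝕜 p 0) (hG : AnalyticAt 𝕜 G 0)
    (hE : ∀ᶠ z in 𝓝 0, p z + z * deriv p z = p z * G z) (n : ℕ) :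
    (n + 1) * iteratedDeriv n p 0 = ∑ i ∈ Finset.range (n + 1),
      (n.choose i : 𝕜) * iteratedDeriv i p 0 * iteratedDeriv (n - i) G 0 := by
  have hE' : deriv (fun z => z * p z) =ᶠ[𝓝 0] fun z => p z * G z := by
    filter_upwards [hE, hp.eventually_analyticAt] with z hz hpz
    rw [← hz, deriv_fun_mul differentiableAt_fun_id hpz.differentiableAt, deriv_id'', one_mul]
  rw [← iteratedDeriv_succ_id_mul_zero hp.contDiffAt, iteratedDeriv_succ',
    hE'.iteratedDeriv_eq n, iteratedDeriv_fun_mul hp.contDiffAt hG.contDiffAt]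

theorem deriv_cpow_const_mul_self {f : ℂ → ℂ} {z : ℂ} (hf : DifferentiableAt ℂ f z)
    (hz : f z ∈ slitPlane) (a : ℂ) :
    deriv (fun y => f y ^ a) z * f z = a * deriv f z * f z ^ a := by
  rw [(hf.hasDerivAt.cpow_const hz).deriv]
  calc a * f z ^ (a - 1) * deriv f z * f z
      = a * deriv f z * (f z ^ (a - 1) * f z ^ (1 : ℂ)) := by rw [cpow_one]; ring
    _ = a * deriv f z * f z ^ a := by rw [← cpow_add _ _ (slitPlane_ne_zero hz), sub_add_cancel]

theorem iteratedDeriv_cpow_const_of_eq_one {f : ℂ → ℂ} {x : ℂ} (hf : AnalyticAt ℂ f x)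
    (hfx : f x = 1) (a : ℂ) :
    iteratedDeriv 1 (fun z => f z ^ a) x = a * iteratedDeriv 1 f x ∧
    iteratedDeriv 2 (fun z => f z ^ a) x =
      a * iteratedDeriv 2 f x + a * (a - 1) * iteratedDeriv 1 f x ^ 2 ∧
    iteratedDeriv 3 (fun z => f z ^ a) x =
      a * iteratedDeriv 3 f x + 3 * a * (a - 1) * iteratedDeriv 1 f x * iteratedDeriv 2 f x +
        a * (a - 1) * (a - 2) * iteratedDeriv 1 f x ^ 3 := by
  set G := fun z => f z ^ a
  have hslit : ∀ᶠ z in 𝓝 x, f z ∈ slitPlane :=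
    hf.continuousAt.preimage_mem_nhds (isOpen_slitPlane.mem_nhds (hfx ▸ one_mem_slitPlane))
  have hG : AnalyticAt ℂ G x := hf.cpow analyticAt_const (hfx ▸ one_mem_slitPlane)
  have hode : (fun z => deriv G z * f z) =ᶠ[𝓝 x] fun z => a * (deriv f z * G z) := by
    filter_upwards [hslit, hf.eventually_analyticAt] with z hz hfz
    rw [deriv_cpow_const_mul_self hfz.differentiableAt hz, mul_assoc]
  have leibniz (n : ℕ) : ∑ i ∈ Finset.range (n + 1),
      (n.choose i : ℂ) * iteratedDeriv (i + 1) G x * iteratedDeriv (n - i) f x =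
      a * ∑ i ∈ Finset.range (n + 1),
        (n.choose i : ℂ) * iteratedDeriv (i + 1) f x * iteratedDeriv (n - i) G x := by
    have := hode.iteratedDeriv_eq n
    rw [iteratedDeriv_fun_mul hG.deriv.contDiffAt hf.contDiffAt, iteratedDeriv_const_mul_field,
      iteratedDeriv_fun_mul hf.deriv.contDiffAt hG.contDiffAt] at this
    simpa only [iteratedDeriv_succ'] using this
  have hG0 : iteratedDeriv 0 G x = 1 := by simp [G, hfx]
  have hf0 : iteratedDeriv 0 f x = 1 := by simp [hfx]
  have e1 := leibniz 0
  have l1 := leibniz 1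
  have l2 := leibniz 2
  simp only [Finset.sum_range_succ, Finset.sum_range_zero] at e1 l1 l2
  norm_num [hG0, hf0] at e1 l1 l2
  have e2 : iteratedDeriv 2 G x = a * iteratedDeriv 2 f x + a * (a - 1) * deriv f x ^ 2 := by
    linear_combination l1 + (a - 1) * deriv f x * e1
  rw [e1, e2] at l2
  simp only [iteratedDeriv_one]
  exact ⟨e1, e2, by linear_combination l2⟩

theorem stmt_4_general (s : ℝ) (h ω : ℂ → ℂ) (d w : ℕ → ℂ)
    (hd1 : d 1 = 1) (hw0 : w 0 = 0)
    (hdsum : ∀ z ∈ Metric.ball (0 : ℂ) 1, Summable fun n => d n * z ^ n)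
    (hh : ∀ z ∈ Metric.ball (0 : ℂ) 1, h z = ∑' n, d n * z ^ n)
    (hwsum : ∀ z ∈ Metric.ball (0 : ℂ) 1, Summable fun n => w n * z ^ n)
    (hω : ∀ z ∈ Metric.ball (0 : ℂ) 1, ω z = ∑' n, w n * z ^ n)
    (heq : ∀ z ∈ Metric.ball (0 : ℂ) 1,
      deriv h z + z * deriv (deriv h) z = deriv h z * (1 - ω z) ^ (-(s : ℂ))) :
    d 2 = (s : ℂ) * w 1 / 2 ∧
    d 3 = ((s : ℂ) / 6) * (w 2 + ((3 * (s : ℂ) + 1) / 2) * w 1 ^ 2) ∧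
    d 4 = ((s : ℂ) / 12) * (w 3 + ((5 * (s : ℂ) + 2) / 2) * w 1 * w 2 +
      ((17 * (s : ℂ) ^ 2 + 15 * (s : ℂ) + 4) / 12) * w 1 ^ 3) := by
  have h_series := (hasFPowerSeriesOnBall_ofScalars_of_eq_tsum one_pos
    (by simpa using hdsum) (by simpa using hh)).hasFPowerSeriesAt
  have ω_series := (hasFPowerSeriesOnBall_ofScalars_of_eq_tsum one_pos
    (by simpa using hwsum) (by simpa using hω)).hasFPowerSeriesAt
  have hp (n : ℕ) : iteratedDeriv n (deriv h) 0 = (n + 1).factorial * d (n + 1) := by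
    rw [← iteratedDeriv_succ', h_series.iteratedDeriv_eq_factorial_mul]
  have hω0 : ω 0 = 0 := by simpa [hw0] using ω_series.iteratedDeriv_eq_factorial_mul 0
  have hA : AnalyticAt ℂ (fun z => 1 - ω z) 0 := analyticAt_const.sub ω_series.analyticAt
  have hA' (k : ℕ) (hk : 0 < k) :
      iteratedDeriv k (fun z => 1 - ω z) 0 = -(k.factorial * w k) := by
    rw [iteratedDeriv_const_sub hk, iteratedDeriv_neg, ω_series.iteratedDeriv_eq_factorial_mul]
  obtain ⟨G1, G2, G3⟩ := iteratedDeriv_cpow_const_of_eq_one hA (by simp [hω0]) (-(s : ℂ))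
  simp only [hA', Nat.ofNat_pos, zero_lt_one] at G1 G2 G3
  have hrec := succ_mul_iteratedDeriv_eq_sum_of_add_id_mul_deriv h_series.analyticAt.deriv
    (hA.cpow analyticAt_const (by simp [hω0]))
    (eventually_of_mem (Metric.ball_mem_nhds 0 one_pos) heq)
  have r1 := hrec 1
  have r2 := hrec 2
  have r3 := hrec 3
  norm_num [Finset.sum_range_succ, hp, hd1, hω0, G1, G2, G3, Nat.factorial] at r1 r2 r3
  have e2 : d 2 = s * w 1 / 2 := by linear_combination r1 / 2
  rw [e2] at r2 r3
  have e3 : d 3 = s / 6 * (w 2 + (3 * s + 1) / 2 * w 1 ^ 2) := by linear_combination r2 / 12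
  rw [e3] at r3
  exact ⟨e2, e3, by linear_combination r3 / 72⟩

/-- first coefficients of a convex function associated to the hyperbola. -/
theorem stmt_4 (s : ℝ) (hs0 : 0 < s) (hs1 : s ≤ 1) (h ω : ℂ → ℂ) (d w : ℕ → ℂ)
    (hd0 : d 0 = 0) (hd1 : d 1 = 1) (hw0 : w 0 = 0)
    (hdsum : ∀ z ∈ Metric.ball (0 : ℂ) 1, Summable fun n => d n * z ^ n)
    (hh : ∀ z ∈ Metric.ball (0 : ℂ) 1, h z = ∑' n, d n * z ^ n)
    (hd' : ∀ z ∈ Metric.ball (0 : ℂ) 1, deriv h z ≠ 0)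
    (hwsum : ∀ z ∈ Metric.ball (0 : ℂ) 1, Summable fun n => w n * z ^ n)
    (hω : ∀ z ∈ Metric.ball (0 : ℂ) 1, ω z = ∑' n, w n * z ^ n)
    (hωb : ∀ z ∈ Metric.ball (0 : ℂ) 1, ‖ω z‖ < 1)
    (heq : ∀ z ∈ Metric.ball (0 : ℂ) 1,
      deriv h z + z * deriv (deriv h) z = deriv h z * (1 - ω z) ^ (-(s : ℂ))) :
    d 2 = (s : ℂ) * w 1 / 2 ∧
    d 3 = ((s : ℂ) / 6) * (w 2 + ((3 * (s : ℂ) + 1) / 2) * w 1 ^ 2) ∧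
    d 4 = ((s : ℂ) / 12) * (w 3 + ((5 * (s : ℂ) + 2) / 2) * w 1 * w 2 +
      ((17 * (s : ℂ) ^ 2 + 15 * (s : ℂ) + 4) / 12) * w 1 ^ 3) :=
  stmt_4_general s h ω d w hd1 hw0 hdsum hh hwsum hω heq
end

section
/- Let g(z) = ∑_{n≥1} B_n z^n be analytic and convex univalent on the unit disk, and let h(z) = ∑_{n≥1} A_n z^n be analytic on the unit disk with h subordinate to g (i.e., h = g ∘ ω for some analytic ω : 𝔻 → 𝔻 with ω(0) = 0). Then |A_n| ≤ |B_1| for every n ≥ 1. -/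
/-!
Put `q(z) = ∑ A (n m) z^m`. If `w^n = z` and `ε` is a primitive `n`-th root of unity, then
`q(z) = (1/n) ∑_{k<n} h(ε^k w)`, the other coefficients cancelling by the root-of-unity filter.
Each `h(ε^k w)` lies in the convex set `g(𝔻)`, hence so does `q(z)`: thus `q = g ∘ ψ` with
`ψ = g⁻¹ ∘ q` a self-map of the disk fixing `0`, and the Schwarz lemma gives
`|A n| = |q'(0)| = |g'(0)| |ψ'(0)| ≤ |B 1|`. Holomorphy of `ψ` rests on `g' ≠ 0`, which holds
because near a critical point a holomorphic function is at least two-to-one.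
-/

open Metric Set Filter Function
open scoped Topology

theorem hasFPowerSeriesOnBall_ofScalars_of_summable {C : ℕ → ℂ} {f : ℂ → ℂ}
    (hs : ∀ z ∈ ball (0 : ℂ) 1, Summable fun m => C m * z ^ m)
    (hf : ∀ z ∈ ball (0 : ℂ) 1, f z = ∑' m, C m * z ^ m) :
    HasFPowerSeriesOnBall f (FormalMultilinearSeries.ofScalars ℂ C) 0 1 where
  r_le := by
    refine ENNReal.le_of_forall_nnreal_lt fun r hr => ?_
    have hr : (r : ℂ) ∈ ball (0 : ℂ) 1 := by simpa using hr
    refine FormalMultilinearSeries.le_radius_of_tendsto _ (l := 0) ?_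
    simpa [FormalMultilinearSeries.ofScalars_norm] using (hs _ hr).tendsto_atTop_zero.norm
  r_pos := one_pos
  hasSum {y} hy := by
    have hy : y ∈ ball (0 : ℂ) 1 := by
      simpa [← ofReal_norm, ENNReal.ofReal_lt_one] using hy
    simpa [FormalMultilinearSeries.ofScalars_apply_eq, hf y hy, mul_comm] using (hs y hy).hasSum

theorem summable_multisection {C : ℕ → ℂ}
    (hs : ∀ z ∈ ball (0 : ℂ) 1, Summable fun m => C m * z ^ m) {n : ℕ} (hn : n ≠ 0)
    {z : ℂ} (hz : z ∈ ball (0 : ℂ) 1) : Summable fun m => C (n * m) * z ^ m := by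
  obtain ⟨w, rfl⟩ := IsAlgClosed.exists_pow_nat_eq z (Nat.pos_of_ne_zero hn)
  have hw : w ∈ ball (0 : ℂ) 1 := by
    simpa [pow_lt_one_iff_of_nonneg (norm_nonneg w) hn] using hz
  simpa [comp_def, pow_mul] using (hs w hw).comp_injective (mul_right_injective₀ hn)

theorem IsPrimitiveRoot.sum_pow_pow_eq_ite {n : ℕ} {ε : ℂ} (hε : IsPrimitiveRoot ε n) (m : ℕ) :
    ∑ k ∈ Finset.range n, (ε ^ m) ^ k = if n ∣ m then (n : ℂ) else 0 := by
  split_ifs with hdvd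
  · simp [(hε.pow_eq_one_iff_dvd m).mpr hdvd]
  · have hεm : ε ^ m ≠ 1 := fun h => hdvd ((hε.pow_eq_one_iff_dvd m).mp h)
    rw [geom_sum_eq hεm, ← pow_mul, mul_comm, pow_mul, hε.pow_eq_one, one_pow, sub_self,
      zero_div]

theorem IsPrimitiveRoot.tsum_multisection_eq_average {C : ℕ → ℂ} {n : ℕ} (hn : n ≠ 0)
    {ε : ℂ} (hε : IsPrimitiveRoot ε n) {w : ℂ}
    (hs : ∀ k, Summable fun m => C m * (ε ^ k * w) ^ m) :
    ∑' m, C (n * m) * (w ^ n) ^ m =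
      (n : ℂ)⁻¹ * ∑ k ∈ Finset.range n, ∑' m, C m * (ε ^ k * w) ^ m := by
  have hfilter : ∀ m, (n : ℂ)⁻¹ * ∑ k ∈ Finset.range n, C m * (ε ^ k * w) ^ m =
      if n ∣ m then C m * w ^ m else 0 := by
    intro m
    have hterm : ∀ k, C m * (ε ^ k * w) ^ m = C m * w ^ m * (ε ^ m) ^ k := fun k => by ring
    rw [Finset.sum_congr rfl fun k _ => hterm k, ← Finset.mul_sum, hε.sum_pow_pow_eq_ite]
    split_ifs
    · field_simp
    · simp
  have hsupp : support (fun m => if n ∣ m then C m * w ^ m else 0) ⊆ range (n * ·) := by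
    intro m hm
    obtain ⟨j, rfl⟩ : n ∣ m := by by_contra h; simp [h] at hm
    exact ⟨j, rfl⟩
  rw [← Summable.tsum_finsetSum fun k _ => hs k, ← tsum_mul_left, tsum_congr hfilter,
    ← (mul_right_injective₀ hn).tsum_eq hsupp]
  simp [pow_mul]

theorem Convex.mapsTo_multisection {C : ℕ → ℂ} {f : ℂ → ℂ} {S : Set ℂ} (hS : Convex ℝ S)
    (hs : ∀ z ∈ ball (0 : ℂ) 1, Summable fun m => C m * z ^ m)
    (hf : ∀ z ∈ ball (0 : ℂ) 1, f z = ∑' m, C m * z ^ m)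
    (hfS : MapsTo f (ball 0 1) S) {n : ℕ} (hn : n ≠ 0) :
    MapsTo (fun z => ∑' m, C (n * m) * z ^ m) (ball 0 1) S := by
  intro z hz
  obtain ⟨w, rfl⟩ := IsAlgClosed.exists_pow_nat_eq z (Nat.pos_of_ne_zero hn)
  have hε := Complex.isPrimitiveRoot_exp n hn
  have hball : ∀ k, (Complex.exp (2 * Real.pi * Complex.I / n)) ^ k * w ∈ ball (0 : ℂ) 1 := by
    intro k
    simpa [Complex.norm_eq_one_of_pow_eq_one hε.pow_eq_one hn,
      pow_lt_one_iff_of_nonneg (norm_nonneg w) hn] using hz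
  simp only [hε.tsum_multisection_eq_average hn fun k => hs _ (hball k),
    ← hf _ (hball _), Finset.mul_sum]
  have hsum := hS.sum_mem (t := Finset.range n) (w := fun _ => (n : ℝ)⁻¹)
    (fun _ _ => by positivity) (by simp [hn]) fun k _ => hfS (hball k)
  simpa [Complex.real_smul] using hsum

theorem AnalyticAt.exists_analyticAt_pow_eq {u : ℂ → ℂ} {ζ : ℂ} (hu : AnalyticAt ℂ u ζ)
    (hu0 : u ζ ≠ 0) {m : ℕ} (hm : m ≠ 0) :
    ∃ v : ℂ → ℂ, AnalyticAt ℂ v ζ ∧ v ζ ≠ 0 ∧ ∀ z, v z ^ m = u z := by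
  obtain ⟨c, hc⟩ := IsAlgClosed.exists_pow_nat_eq (u ζ) (Nat.pos_of_ne_zero hm)
  refine ⟨fun z => c * (u z / u ζ) ^ (m⁻¹ : ℂ), ?_, ?_, fun z => ?_⟩
  · refine analyticAt_const.mul ((hu.div analyticAt_const hu0).cpow analyticAt_const ?_)
    simp [hu0]
  · have hc0 : c ≠ 0 := by rintro rfl; exact hu0 (by simp [← hc, hm])
    simp [hu0, hc0]
  · rw [mul_pow, Complex.cpow_nat_inv_pow _ hm, hc, mul_div_cancel₀ _ hu0]

theorem HasStrictDerivAt.not_injOn_pow {k : ℂ → ℂ} {c ζ : ℂ} (hk : HasStrictDerivAt k c ζ)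
    (hc : c ≠ 0) (hk0 : k ζ = 0) {m : ℕ} (hm : 2 ≤ m) {V : Set ℂ} (hV : V ∈ 𝓝 ζ) :
    ¬ InjOn (fun z => k z ^ m) V := by
  intro hinj
  have hkV : k '' V ∈ 𝓝 (0 : ℂ) := by
    rw [← hk0, ← hk.map_nhds_eq hc]
    exact image_mem_map hV
  obtain ⟨ρ, hρ⟩ : ∃ ρ : ℂ, IsPrimitiveRoot ρ m :=
    ⟨_, Complex.isPrimitiveRoot_exp m (by omega)⟩
  have hρkV : ∀ᶠ s in 𝓝 (0 : ℂ), s * ρ ∈ k '' V :=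
    (continuous_mul_const ρ).tendsto' 0 0 (zero_mul ρ) hkV
  have hpair : ∀ᶠ s in 𝓝[≠] (0 : ℂ), (s ∈ k '' V ∧ s * ρ ∈ k '' V) ∧ s ≠ 0 :=
    ((Filter.Eventually.and hkV hρkV).filter_mono nhdsWithin_le_nhds).and self_mem_nhdsWithin
  obtain ⟨s, ⟨⟨a, ha, rfl⟩, b, hb, hkb⟩, hs0⟩ := hpair.exists
  have hab : a = b := hinj ha hb (by simp only [hkb, mul_pow, hρ.pow_eq_one, mul_one])
  apply hρ.ne_one (by omega)
  subst hab
  exact (mul_eq_left₀ hs0).mp hkb.symm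

theorem AnalyticAt.deriv_ne_zero_of_injOn {g : ℂ → ℂ} {ζ : ℂ} {U : Set ℂ}
    (hg : AnalyticAt ℂ g ζ) (hU : U ∈ 𝓝 ζ) (hinj : InjOn g U) : deriv g ζ ≠ 0 := by
  intro hd
  have hnconst : ¬ ∀ᶠ z in 𝓝 ζ, g z - g ζ = 0 := by
    intro hev
    have hpunct : ∀ᶠ z in 𝓝[≠] ζ, (g z - g ζ = 0 ∧ z ∈ U) ∧ z ≠ ζ :=
      ((hev.and hU).filter_mono nhdsWithin_le_nhds).and self_mem_nhdsWithin
    obtain ⟨z, ⟨hz, hzU⟩, hzζ⟩ := hpunct.exists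
    exact hzζ (hinj hzU (mem_of_mem_nhds hU) (sub_eq_zero.mp hz))
  obtain ⟨m, u, hu, hu0, hgu⟩ :=
    (hg.sub analyticAt_const).exists_eventuallyEq_pow_smul_nonzero_iff.mpr hnconst
  have hm0 : m ≠ 0 := by
    rintro rfl
    exact hu0 (by simpa using hgu.self_of_nhds.symm)
  -- `g - g ζ = k ^ m` near `ζ` with `k' ζ ≠ 0`; then `g' ζ = 0` forces `m ≥ 2`.
  obtain ⟨v, hv, hv0, hvu⟩ := hu.exists_analyticAt_pow_eq hu0 hm0
  set k : ℂ → ℂ := fun z => (z - ζ) * v z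
  have hk : HasStrictDerivAt k (v ζ) ζ := by
    simpa using HasStrictDerivAt.fun_mul ((hasStrictDerivAt_id ζ).sub_const ζ) hv.hasStrictDerivAt
  have hgk : (fun z => g z - g ζ) =ᶠ[𝓝 ζ] fun z => k z ^ m := by
    filter_upwards [hgu] with z hz
    rw [Pi.sub_apply] at hz
    rw [hz, smul_eq_mul, ← hvu, mul_pow]
  have hm1 : m ≠ 1 := by
    rintro rfl
    refine hv0 ?_
    calc v ζ = deriv k ζ := hk.hasDerivAt.deriv.symm
      _ = deriv (fun z => g z - g ζ) ζ := by simp [hgk.deriv_eq]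
      _ = 0 := by rw [deriv_sub_const, hd]
  refine hk.not_injOn_pow hv0 (by simp [k]) (m := m) (by omega) (inter_mem hU hgk)
    fun a ha b hb hab => hinj ha.1 hb.1 ?_
  have hgab : g a - g ζ = g b - g ζ := (show g a - g ζ = k a ^ m from ha.2).trans <|
    hab.trans (show g b - g ζ = k b ^ m from hb.2).symm
  exact sub_left_injective hgab

theorem AnalyticAt.hasStrictDerivAt_invFunOn {g : ℂ → ℂ} {a : ℂ} {U : Set ℂ}
    (hg : AnalyticAt ℂ g a) (hU : U ∈ 𝓝 a) (hinj : InjOn g U) :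
    HasStrictDerivAt (invFunOn g U) (deriv g a)⁻¹ (g a) :=
  hg.hasStrictDerivAt.to_local_left_inverse (hg.deriv_ne_zero_of_injOn hU hinj)
    (eventually_of_mem hU hinj.leftInvOn_invFunOn)

theorem norm_deriv_le_of_mapsTo_image {g q : ℂ → ℂ} (hg : AnalyticOnNhd ℂ g (ball 0 1))
    (hinj : InjOn g (ball 0 1)) (hq : DifferentiableOn ℂ q (ball 0 1))
    (hqg : MapsTo q (ball 0 1) (g '' ball 0 1)) (hq0 : q 0 = g 0) :
    ‖deriv q 0‖ ≤ ‖deriv g 0‖ := by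
  set ψ := invFunOn g (ball 0 1) ∘ q
  have hψ : ∀ z ∈ ball (0 : ℂ) 1, ψ z ∈ ball 0 1 ∧ g (ψ z) = q z :=
    fun z hz => ⟨invFunOn_mem (hqg hz), invFunOn_eq (hqg hz)⟩
  have h0 : (0 : ℂ) ∈ ball (0 : ℂ) 1 := mem_ball_self one_pos
  have hψ0 : ψ 0 = 0 := hinj (hψ 0 h0).1 h0 ((hψ 0 h0).2.trans hq0)
  have hψd : DifferentiableOn ℂ ψ (ball 0 1) := fun z hz => by
    obtain ⟨hψz, hgψz⟩ := hψ z hz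
    have hinv := ((hg _ hψz).hasStrictDerivAt_invFunOn (isOpen_ball.mem_nhds hψz)
      hinj).hasDerivAt.differentiableAt
    rw [hgψz] at hinv
    exact (hinv.comp z (hq.differentiableAt (isOpen_ball.mem_nhds hz))).differentiableWithinAt
  have hschwarz : ‖deriv ψ 0‖ ≤ 1 := Complex.norm_deriv_le_one_of_mapsTo_ball hψd
    (fun z hz => by rw [hψ0]; exact ball_subset_closedBall (hψ z hz).1) one_pos
  have hchain : deriv q 0 = deriv g 0 * deriv ψ 0 := by
    have hqψ : q =ᶠ[𝓝 0] g ∘ ψ :=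
      eventually_of_mem (isOpen_ball.mem_nhds h0) fun z hz => (hψ z hz).2.symm
    have hgψ0 : DifferentiableAt ℂ g (ψ 0) := by
      rw [hψ0]; exact (hg 0 h0).differentiableAt
    rw [hqψ.deriv_eq, deriv_comp 0 hgψ0 (hψd.differentiableAt (isOpen_ball.mem_nhds h0)), hψ0]
  calc ‖deriv q 0‖ = ‖deriv g 0‖ * ‖deriv ψ 0‖ := by rw [hchain, norm_mul]
    _ ≤ ‖deriv g 0‖ := mul_le_of_le_one_right (norm_nonneg _) hschwarz

theorem stmt_6_general (g h ω : ℂ → ℂ) (A B : ℕ → ℂ)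
    (hg : AnalyticOnNhd ℂ g (Metric.ball (0 : ℂ) 1))
    (hginj : Set.InjOn g (Metric.ball (0 : ℂ) 1))
    (hgconv : Convex ℝ (g '' Metric.ball (0 : ℂ) 1))
    (hB0 : B 0 = 0)
    (hBsum : ∀ z ∈ Metric.ball (0 : ℂ) 1, Summable fun n => B n * z ^ n)
    (hgB : ∀ z ∈ Metric.ball (0 : ℂ) 1, g z = ∑' n, B n * z ^ n)
    (hA0 : A 0 = 0)
    (hAsum : ∀ z ∈ Metric.ball (0 : ℂ) 1, Summable fun n => A n * z ^ n)
    (hhA : ∀ z ∈ Metric.ball (0 : ℂ) 1, h z = ∑' n, A n * z ^ n)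
    (hωb : ∀ z ∈ Metric.ball (0 : ℂ) 1, ‖ω z‖ < 1)
    (hsub : ∀ z ∈ Metric.ball (0 : ℂ) 1, h z = g (ω z)) :
    ∀ n, 1 ≤ n → ‖A n‖ ≤ ‖B 1‖ := by
  intro n hn
  have hn0 : n ≠ 0 := Nat.one_le_iff_ne_zero.mp hn
  set q : ℂ → ℂ := fun z => ∑' m, A (n * m) * z ^ m
  have hq := hasFPowerSeriesOnBall_ofScalars_of_summable (f := q)
    (fun _ hz => summable_multisection hAsum hn0 hz) fun _ _ => rfl
  have hG := hasFPowerSeriesOnBall_ofScalars_of_summable hBsum hgB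
  have hhg : MapsTo h (ball 0 1) (g '' ball 0 1) := fun z hz =>
    hsub z hz ▸ mem_image_of_mem g (mem_ball_zero_iff.mpr (hωb z hz))
  have hq0 : q 0 = g 0 := by
    rw [← hq.coeff_zero 0, ← hG.coeff_zero 0]
    simp [hA0, hB0]
  calc ‖A n‖ = ‖deriv q 0‖ := by simp [hq.hasFPowerSeriesAt.deriv]
    _ ≤ ‖deriv g 0‖ := norm_deriv_le_of_mapsTo_image hg hginj
        (by simpa using Metric.eball_coe (x := (0 : ℂ)) (ε := 1) ▸ hq.differentiableOn)
        (hgconv.mapsTo_multisection hAsum hhA hhg hn0) hq0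
    _ = ‖B 1‖ := by simp [hG.hasFPowerSeriesAt.deriv]

/-- Rogosinski's theorem. -/
theorem stmt_6 (g h ω : ℂ → ℂ) (A B : ℕ → ℂ)
    (hg : AnalyticOnNhd ℂ g (Metric.ball (0 : ℂ) 1))
    (hginj : Set.InjOn g (Metric.ball (0 : ℂ) 1))
    (hgconv : Convex ℝ (g '' Metric.ball (0 : ℂ) 1))
    (hB0 : B 0 = 0)
    (hBsum : ∀ z ∈ Metric.ball (0 : ℂ) 1, Summable fun n => B n * z ^ n)
    (hgB : ∀ z ∈ Metric.ball (0 : ℂ) 1, g z = ∑' n, B n * z ^ n)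
    (hA0 : A 0 = 0)
    (hAsum : ∀ z ∈ Metric.ball (0 : ℂ) 1, Summable fun n => A n * z ^ n)
    (hhA : ∀ z ∈ Metric.ball (0 : ℂ) 1, h z = ∑' n, A n * z ^ n)
    (hω : AnalyticOnNhd ℂ ω (Metric.ball (0 : ℂ) 1)) (hω0 : ω 0 = 0)
    (hωb : ∀ z ∈ Metric.ball (0 : ℂ) 1, ‖ω z‖ < 1)
    (hsub : ∀ z ∈ Metric.ball (0 : ℂ) 1, h z = g (ω z)) :
    ∀ n, 1 ≤ n → ‖A n‖ ≤ ‖B 1‖ :=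
  stmt_6_general g h ω A B hg hginj hgconv hB0 hBsum hgB hA0 hAsum hhA hωb hsub
end

section
/- Let 0 < s ≤ 1, f ∈ ST_hpl(s) with f(z) = z + a₂z² + a₃z³ + ⋯, and λ ∈ ℝ. Then |a₃ − λa₂²| ≤ s²(λ − (3s+1)/(4s)) if λ ≥ (3s+3)/(4s); |a₃ − λa₂²| ≤ s/2 if (3s−1)/(4s) ≤ λ ≤ (3s+3)/(4s); and |a₃ − λa₂²| ≤ −s²(λ − (3s+1)/(4s)) if λ ≤ (3s−1)/(4s). -/
/-!
Write `ω(z) = ∑ wₙ zⁿ`. The hypotheses give `a₃ - λ a₂² = (s/2) (w₂ - μ w₁²)` with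
`μ = 2λs - (3s+1)/2`, so everything reduces to the sharp bound `|w₂ - μ w₁²| ≤ max 1 |μ|`.
That bound follows from `|w₂| ≤ 1 - |w₁|²`, which is the Schwarz–Pick inequality
`|g'(0)| ≤ 1 - |g(0)|²` for the self-map `g(z) = ω(z)/z` of the closed disk: compose `g` with the
disk automorphism sending `g(0)` to `0` and apply the Schwarz lemma.
-/

open Metric Set Filter Topology Complex ComplexConjugate
open scoped NNReal

theorem hasFPowerSeriesOnBall_ofScalars_of_summable_s9 {ω : ℂ → ℂ} {w : ℕ → ℂ} {r : ℝ≥0}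
    (hr : 0 < r) (hsum : ∀ z ∈ ball (0 : ℂ) r, Summable fun n => w n * z ^ n)
    (hrep : ∀ z ∈ ball (0 : ℂ) r, ω z = ∑' n, w n * z ^ n) :
    HasFPowerSeriesOnBall ω (FormalMultilinearSeries.ofScalars ℂ w) 0 r := by
  have hball : eball (0 : ℂ) r = ball 0 r := eball_coe
  refine ⟨?_, by exact_mod_cast hr, fun {y} hy => ?_⟩
  · refine ENNReal.le_of_forall_nnreal_lt fun t ht => ?_
    have ht' : (t : ℂ) ∈ ball (0 : ℂ) r := by simpa using ht
    refine FormalMultilinearSeries.le_radius_of_tendsto _ (l := 0) ?_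
    simpa [FormalMultilinearSeries.ofScalars_norm] using (hsum _ ht').tendsto_atTop_zero.norm
  · rw [hball] at hy
    simpa [FormalMultilinearSeries.ofScalars_apply_eq, mul_comm, hrep y hy] using
      (hsum y hy).hasSum

theorem norm_sub_le_norm_one_sub_conj_mul {a b : ℂ} (ha : ‖a‖ ≤ 1) (hb : ‖b‖ ≤ 1) :
    ‖a - b‖ ≤ ‖1 - conj b * a‖ := by
  have key : normSq (1 - conj b * a) - normSq (a - b) = (1 - normSq a) * (1 - normSq b) := by
    simp only [normSq_apply, sub_re, sub_im, mul_re, mul_im, one_re, one_im, conj_re, conj_im]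
    ring
  have hna : normSq a ≤ 1 := by rw [normSq_eq_norm_sq]; nlinarith [norm_nonneg a]
  have hnb : normSq b ≤ 1 := by rw [normSq_eq_norm_sq]; nlinarith [norm_nonneg b]
  simpa [norm_def] using Real.sqrt_le_sqrt (by nlinarith : normSq (a - b) ≤ normSq (1 - conj b * a))

theorem norm_deriv_le_one_sub_sq_of_mapsTo {g : ℂ → ℂ} (hg : DifferentiableOn ℂ g (ball 0 1))
    (hmaps : MapsTo g (ball 0 1) (closedBall 0 1)) : ‖deriv g 0‖ ≤ 1 - ‖g 0‖ ^ 2 := by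
  have h0 : (0 : ℂ) ∈ ball (0 : ℂ) 1 := mem_ball_self one_pos
  have hg1 : ∀ z ∈ ball (0 : ℂ) 1, ‖g z‖ ≤ 1 := fun z hz => by simpa using hmaps hz
  rcases (hg1 0 h0).lt_or_eq with hlt | heq
  · set b := g 0
    set m : ℂ → ℂ := fun z => (g z - b) / (1 - conj b * g z)
    have hden : ∀ z ∈ ball (0 : ℂ) 1, 1 - conj b * g z ≠ 0 := by
      intro z hz h
      have : ‖conj b * g z‖ < 1 := by
        rw [norm_mul, RCLike.norm_conj]
        nlinarith [hg1 z hz, norm_nonneg b, norm_nonneg (g z)]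
      rw [← sub_eq_zero.mp h, norm_one] at this
      exact this.false
    have hden0 : (1 : ℂ) - conj b * b = ((1 - ‖b‖ ^ 2 : ℝ) : ℂ) := by
      rw [mul_comm, mul_conj, normSq_eq_norm_sq]; push_cast; ring
    have hpos : 0 < 1 - ‖b‖ ^ 2 := by nlinarith [norm_nonneg b]
    have hm : DifferentiableOn ℂ m (ball 0 1) :=
      (hg.sub_const b).div ((hg.const_mul _).const_sub 1) hden
    have hm0 : m 0 = 0 := by simp only [m, b, sub_self, zero_div]
    have hm_maps : MapsTo m (ball 0 1) (closedBall (m 0) 1) := fun z hz => by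
      rw [hm0, mem_closedBall_zero_iff, norm_div]
      exact div_le_one_of_le₀ (norm_sub_le_norm_one_sub_conj_mul (hg1 z hz) hlt.le)
        (norm_nonneg _)
    have hderiv : deriv m 0 = deriv g 0 / ((1 - ‖b‖ ^ 2 : ℝ) : ℂ) := by
      have hgd := (hg.differentiableAt (isOpen_ball.mem_nhds h0)).hasDerivAt
      have : HasDerivAt m _ 0 :=
        (hgd.sub_const b).div ((hgd.const_mul (conj b)).const_sub 1) (hden 0 h0)
      rw [this.deriv, ← hden0, show g 0 = b from rfl, sub_self, zero_mul, sub_zero]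
      field_simp [hden 0 h0]
    have := norm_deriv_le_one_of_mapsTo_ball hm hm_maps one_pos
    rwa [hderiv, norm_div, norm_real, Real.norm_of_nonneg hpos.le, div_le_one hpos] at this
  · have hmax : IsMaxOn (norm ∘ g) (ball 0 1) 0 := fun z hz => by
      simpa [heq] using hg1 z hz
    have hconst : g =ᶠ[𝓝 0] fun _ => g 0 := eventuallyEq_of_mem (isOpen_ball.mem_nhds h0)
      (Complex.eqOn_of_isPreconnected_of_isMaxOn_norm (convex_ball (0 : ℂ) 1).isPreconnected
        isOpen_ball hg h0 hmax)
    rw [hconst.deriv_eq, heq]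
    simp

theorem norm_coeff_two_le_of_mapsTo {ω : ℂ → ℂ} {p : FormalMultilinearSeries ℂ ℂ ℂ}
    (hω : HasFPowerSeriesOnBall ω p 0 1) (h0 : ω 0 = 0)
    (hmaps : MapsTo ω (ball 0 1) (closedBall 0 1)) :
    ‖p.coeff 2‖ ≤ 1 - ‖p.coeff 1‖ ^ 2 := by
  have hball : ball (0 : ℂ) 1 = eball 0 1 := by
    simpa using (eball_coe (x := (0 : ℂ)) (ε := 1)).symm
  have hd : DifferentiableOn ℂ ω (ball 0 1) := hball ▸ hω.differentiableOn
  have hslope := hω.hasFPowerSeriesAt.has_fpower_series_dslope_fslope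
  have hg : DifferentiableOn ℂ (dslope ω 0) (ball 0 1) :=
    (differentiableOn_dslope (isOpen_ball.mem_nhds (mem_ball_self one_pos))).mpr hd
  have hg_maps : MapsTo (dslope ω 0) (ball 0 1) (closedBall 0 1) := fun z hz => by
    simpa using norm_dslope_le_div_of_mapsTo_ball hd (by rwa [h0]) hz
  have hg0 : dslope ω 0 0 = p.coeff 1 := by
    rw [dslope_same, hω.hasFPowerSeriesAt.deriv]; rfl
  have hg'0 : deriv (dslope ω 0) 0 = p.coeff 2 := by
    rw [hslope.deriv, ← FormalMultilinearSeries.coeff_fslope]; rfl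
  have := norm_deriv_le_one_sub_sq_of_mapsTo hg hg_maps
  rwa [hg0, hg'0] at this

theorem norm_sub_mul_sq_le_max {c₁ c₂ : ℂ} (h : ‖c₂‖ ≤ 1 - ‖c₁‖ ^ 2) (μ : ℂ) :
    ‖c₂ - μ * c₁ ^ 2‖ ≤ max 1 ‖μ‖ := by
  have ht : ‖c₁‖ ^ 2 ≤ 1 := by linarith [norm_nonneg c₂]
  calc ‖c₂ - μ * c₁ ^ 2‖ ≤ ‖c₂‖ + ‖μ‖ * ‖c₁‖ ^ 2 := by
        rw [← norm_pow, ← norm_mul]; exact norm_sub_le _ _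
    _ ≤ (1 - ‖c₁‖ ^ 2) * 1 + ‖c₁‖ ^ 2 * ‖μ‖ := by linarith
    _ ≤ (1 - ‖c₁‖ ^ 2) * max 1 ‖μ‖ + ‖c₁‖ ^ 2 * max 1 ‖μ‖ := by
        exact add_le_add (mul_le_mul_of_nonneg_left (le_max_left _ _) (sub_nonneg.mpr ht))
          (mul_le_mul_of_nonneg_left (le_max_right _ _) (sq_nonneg _))
    _ = max 1 ‖μ‖ := by ring

theorem stmt_9_general (s lam : ℝ) (hs0 : 0 < s)
    (ω : ℂ → ℂ) (w a : ℕ → ℂ) (hw0 : w 0 = 0)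
    (hsum : ∀ z ∈ Metric.ball (0 : ℂ) 1, Summable fun n => w n * z ^ n)
    (hrep : ∀ z ∈ Metric.ball (0 : ℂ) 1, ω z = ∑' n, w n * z ^ n)
    (hb : ∀ z ∈ Metric.ball (0 : ℂ) 1, ‖ω z‖ < 1)
    (ha2 : a 2 = (s : ℂ) * w 1)
    (ha3 : a 3 = ((s : ℂ) / 2) * (w 2 + ((3 * (s : ℂ) + 1) / 2) * w 1 ^ 2)) :
    ((3 * s + 3) / (4 * s) ≤ lam →
      ‖a 3 - (lam : ℂ) * a 2 ^ 2‖ ≤ s ^ 2 * (lam - (3 * s + 1) / (4 * s))) ∧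
    ((3 * s - 1) / (4 * s) ≤ lam ∧ lam ≤ (3 * s + 3) / (4 * s) →
      ‖a 3 - (lam : ℂ) * a 2 ^ 2‖ ≤ s / 2) ∧
    (lam ≤ (3 * s - 1) / (4 * s) →
      ‖a 3 - (lam : ℂ) * a 2 ^ 2‖ ≤ -(s ^ 2 * (lam - (3 * s + 1) / (4 * s)))) := by
  have hω := hasFPowerSeriesOnBall_ofScalars_of_summable_s9 (r := 1) one_pos
    (by simpa using hsum) (by simpa using hrep)
  have hw := norm_coeff_two_le_of_mapsTo hω (by simpa [hw0] using (hω.coeff_zero 1).symm)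
    fun z hz => mem_closedBall_zero_iff.mpr (hb z hz).le
  simp only [FormalMultilinearSeries.coeff_ofScalars] at hw
  set μ : ℝ := 2 * lam * s - (3 * s + 1) / 2 with hμ_def
  have hbound : ‖a 3 - (lam : ℂ) * a 2 ^ 2‖ ≤ s / 2 * max 1 |μ| := by
    have hfactor : a 3 - (lam : ℂ) * a 2 ^ 2 = ((s / 2 : ℝ) : ℂ) * (w 2 - (μ : ℂ) * w 1 ^ 2) := by
      rw [ha2, ha3]; push_cast [μ]; ring
    have hw' := norm_sub_mul_sq_le_max hw (μ : ℂ)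
    rw [norm_real, Real.norm_eq_abs] at hw'
    rw [hfactor, norm_mul, norm_real, Real.norm_of_nonneg (by positivity)]
    gcongr
  have hμ : s / 2 * μ = s ^ 2 * (lam - (3 * s + 1) / (4 * s)) := by
    field_simp [μ]; ring
  have h4s : 0 < 4 * s := by positivity
  refine ⟨fun h => ?_, fun ⟨h₁, h₂⟩ => ?_, fun h => ?_⟩
  · have : 1 ≤ μ := by rw [div_le_iff₀ h4s] at h; linarith
    rwa [max_eq_right (by rwa [abs_of_nonneg (by linarith)]), abs_of_nonneg (by linarith),
      hμ] at hbound
  · rw [div_le_iff₀ h4s] at h₁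
    rw [le_div_iff₀ h4s] at h₂
    rwa [max_eq_left (abs_le.mpr ⟨by linarith, by linarith⟩), mul_one] at hbound
  · have : μ ≤ -1 := by rw [le_div_iff₀ h4s] at h; linarith
    rwa [max_eq_right (by rw [abs_of_neg (by linarith)]; linarith), abs_of_neg (by linarith),
      mul_neg, hμ] at hbound

/-- the Fekete–Szegő inequalities for `ST_hpl(s)`, stated (as sanctioned by
the context) via a Schwarz function `ω` with coefficients `w` and
`a₂ = s w₁`, `a₃ = (s/2)(w₂ + ((3s+1)/2) w₁²)`. -/
theorem stmt_9 (s lam : ℝ) (hs0 : 0 < s) (hs1 : s ≤ 1)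
    (ω : ℂ → ℂ) (w a : ℕ → ℂ) (hw0 : w 0 = 0)
    (hsum : ∀ z ∈ Metric.ball (0 : ℂ) 1, Summable fun n => w n * z ^ n)
    (hrep : ∀ z ∈ Metric.ball (0 : ℂ) 1, ω z = ∑' n, w n * z ^ n)
    (hb : ∀ z ∈ Metric.ball (0 : ℂ) 1, ‖ω z‖ < 1)
    (ha2 : a 2 = (s : ℂ) * w 1)
    (ha3 : a 3 = ((s : ℂ) / 2) * (w 2 + ((3 * (s : ℂ) + 1) / 2) * w 1 ^ 2)) :
    ((3 * s + 3) / (4 * s) ≤ lam →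
      ‖a 3 - (lam : ℂ) * a 2 ^ 2‖ ≤ s ^ 2 * (lam - (3 * s + 1) / (4 * s))) ∧
    ((3 * s - 1) / (4 * s) ≤ lam ∧ lam ≤ (3 * s + 3) / (4 * s) →
      ‖a 3 - (lam : ℂ) * a 2 ^ 2‖ ≤ s / 2) ∧
    (lam ≤ (3 * s - 1) / (4 * s) →
      ‖a 3 - (lam : ℂ) * a 2 ^ 2‖ ≤ -(s ^ 2 * (lam - (3 * s + 1) / (4 * s)))) :=
  stmt_9_general s lam hs0 ω w a hw0 hsum hrep hb ha2 ha3
end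

section
/- Let 0 < s ≤ 1, h ∈ CV_hpl(s) with h(z) = z + d₂z² + d₃z³ + ⋯, and λ ∈ ℝ. Then |d₃ − λd₂²| ≤ −(s²/4)(λ − (3s+1)/(3s)) if λ ≤ (3s−1)/(3s); |d₃ − λd₂²| ≤ s/6 if (3s−1)/(3s) ≤ λ ≤ (s+1)/s; and |d₃ − λd₂²| ≤ (s²/4)(λ − (3s+1)/(3s)) if λ ≥ (s+1)/s. -/
/-!
With `t = (3s+1)/2 - 3λs/2` one has `d₃ - λd₂² = (s/6)(w₂ + t w₁²)`, so everything rests on the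
classical bound `|w₂| ≤ 1 - |w₁|²` for a Schwarz function, which gives
`|w₂ + t w₁²| ≤ (1 - |w₁|²) + |t| |w₁|² ≤ max 1 |t|`; the three ranges of `λ` are exactly
`t ≥ 1`, `|t| ≤ 1` and `t ≤ -1`.

The coefficient bound is Schwarz–Pick at the origin applied to `ω(z)/z`, which maps the disc into
the closed disc by the Schwarz lemma. Schwarz–Pick at the origin in turn is the Schwarz lemma for
`g` followed by the disc automorphism `u ↦ (u - a)/(1 - āu)`, `a = g 0`, unless `|g 0| = 1`, when
the maximum modulus principle makes `g` constant.
-/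

open Complex Metric Set FormalMultilinearSeries Topology
open scoped NNReal ComplexConjugate

theorem hasFPowerSeriesOnBall_tsum_ofScalars {c : ℕ → ℂ} {R : ℝ≥0} (hR : 0 < R)
    (hc : ∀ z ∈ ball (0 : ℂ) R, Summable fun n => c n * z ^ n) :
    HasFPowerSeriesOnBall (fun z => ∑' n, c n * z ^ n) (ofScalars ℂ c) 0 R where
  r_le := by
    refine ENNReal.le_of_forall_nnreal_lt fun r hr => le_radius_of_summable _ ?_
    have hr : (r : ℂ) ∈ ball (0 : ℂ) R := by simpa using hr
    simpa [ofScalars_norm] using summable_norm_iff.mpr (hc r hr)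
  r_pos := ENNReal.coe_pos.mpr hR
  hasSum {y} hy := by
    rw [eball_coe] at hy
    simpa [ofScalars_apply_eq, mul_comm] using (hc y hy).hasSum

theorem norm_one_sub_conj_mul_sq_sub_norm_sub_sq (a u : ℂ) :
    ‖1 - conj a * u‖ ^ 2 - ‖u - a‖ ^ 2 = (1 - ‖a‖ ^ 2) * (1 - ‖u‖ ^ 2) := by
  simp only [← normSq_eq_norm_sq, normSq_apply, sub_re, sub_im, mul_re, mul_im, one_re, one_im,
    conj_re, conj_im]
  ring

theorem one_sub_conj_mul_ne_zero {a u : ℂ} (ha : ‖a‖ < 1) (hu : ‖u‖ ≤ 1) :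
    1 - conj a * u ≠ 0 := by
  refine sub_ne_zero.mpr fun h => ?_
  have : ‖conj a * u‖ < 1 := by
    rw [norm_mul, RCLike.norm_conj]
    nlinarith [norm_nonneg a, norm_nonneg u]
  simp [← h] at this

theorem norm_div_one_sub_conj_mul_le_one {a u : ℂ} (ha : ‖a‖ < 1) (hu : ‖u‖ ≤ 1) :
    ‖(u - a) / (1 - conj a * u)‖ ≤ 1 := by
  rw [norm_div]
  refine div_le_one_of_le₀ ?_ (norm_nonneg _)
  have hsq := norm_one_sub_conj_mul_sq_sub_norm_sub_sq a u
  have : 0 ≤ (1 - ‖a‖ ^ 2) * (1 - ‖u‖ ^ 2) := by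
    apply mul_nonneg <;> nlinarith [norm_nonneg a, norm_nonneg u]
  exact (pow_le_pow_iff_left₀ (norm_nonneg _) (norm_nonneg _) two_ne_zero).mp (by linarith)

theorem hasDerivAt_div_one_sub_conj_mul_self {a : ℂ} (ha : ‖a‖ < 1) :
    HasDerivAt (fun u => (u - a) / (1 - conj a * u)) (((1 - ‖a‖ ^ 2 : ℝ) : ℂ)⁻¹) a := by
  have hden : 1 - conj a * a ≠ 0 := one_sub_conj_mul_ne_zero ha ha.le
  have hconj : conj a * a = ((‖a‖ ^ 2 : ℝ) : ℂ) := by rw [mul_comm, mul_conj, normSq_eq_norm_sq]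
  refine (((hasDerivAt_id' a).sub_const a).div
    (((hasDerivAt_id' a).const_mul (conj a)).const_sub 1) hden).congr_deriv ?_
  rw [sub_self, zero_mul, sub_zero, one_mul]
  rw [hconj] at hden ⊢
  push_cast at hden ⊢
  field_simp

theorem deriv_eq_zero_of_mapsTo_ball_of_norm_eq_one {g : ℂ → ℂ}
    (hd : DifferentiableOn ℂ g (ball 0 1)) (hg : MapsTo g (ball 0 1) (closedBall 0 1))
    (h1 : ‖g 0‖ = 1) : deriv g 0 = 0 := by
  have hball : ball (0 : ℂ) 1 ∈ 𝓝 0 := ball_mem_nhds _ one_pos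
  have hconst : g =ᶠ[𝓝 0] fun _ => g 0 :=
    Complex.eventually_eq_of_isLocalMax_norm
      (Filter.eventually_of_mem hball fun z hz => hd.differentiableAt (isOpen_ball.mem_nhds hz))
      (Filter.eventually_of_mem hball fun z hz => by
        simpa [h1] using mem_closedBall_zero_iff.mp (hg hz))
  simpa using hconst.deriv_eq

theorem norm_deriv_le_one_sub_sq_of_mapsTo_ball {g : ℂ → ℂ}
    (hd : DifferentiableOn ℂ g (ball 0 1)) (hg : MapsTo g (ball 0 1) (closedBall 0 1)) :
    ‖deriv g 0‖ ≤ 1 - ‖g 0‖ ^ 2 := by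
  have hle : ∀ z ∈ ball (0 : ℂ) 1, ‖g z‖ ≤ 1 := fun z hz => mem_closedBall_zero_iff.mp (hg hz)
  rcases (hle 0 (mem_ball_self one_pos)).eq_or_lt with h1 | h1
  · simp [deriv_eq_zero_of_mapsTo_ball_of_norm_eq_one hd hg h1, h1]
  set a := g 0
  set φ : ℂ → ℂ := fun z => (g z - a) / (1 - conj a * g z)
  have hφd : DifferentiableOn ℂ φ (ball 0 1) :=
    (hd.sub_const a).div ((differentiableOn_const 1).sub (hd.const_mul _))
      fun z hz => one_sub_conj_mul_ne_zero h1 (hle z hz)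
  have hφ : MapsTo φ (ball 0 1) (closedBall (φ 0) 1) := fun z hz => by
    simpa [φ, a] using norm_div_one_sub_conj_mul_le_one h1 (hle z hz)
  have hderiv : deriv φ 0 = ((1 - ‖a‖ ^ 2 : ℝ) : ℂ)⁻¹ * deriv g 0 :=
    ((hasDerivAt_div_one_sub_conj_mul_self h1).comp 0
      (hd.differentiableAt (ball_mem_nhds _ one_pos)).hasDerivAt).deriv
  have hpos : 0 < 1 - ‖a‖ ^ 2 := by nlinarith [norm_nonneg a]
  have := Complex.norm_deriv_le_one_of_mapsTo_ball hφd hφ one_pos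
  rw [hderiv, norm_mul, norm_inv, norm_real, Real.norm_of_nonneg hpos.le, inv_mul_le_iff₀ hpos,
    mul_one] at this
  exact this

theorem norm_coeff_two_le_of_mapsTo_ball {ω : ℂ → ℂ} {p : FormalMultilinearSeries ℂ ℂ ℂ}
    (hd : DifferentiableOn ℂ ω (ball 0 1)) (hp : HasFPowerSeriesAt ω p 0)
    (hω : MapsTo ω (ball 0 1) (closedBall 0 1)) (h0 : ω 0 = 0) :
    ‖p.coeff 2‖ ≤ 1 - ‖p.coeff 1‖ ^ 2 := by
  have hgd : DifferentiableOn ℂ (dslope ω 0) (ball 0 1) :=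
    (Complex.differentiableOn_dslope (ball_mem_nhds _ one_pos)).mpr hd
  have hg : MapsTo (dslope ω 0) (ball 0 1) (closedBall 0 1) := fun z hz => by
    simpa using Complex.norm_dslope_le_div_of_mapsTo_ball hd (by rwa [h0]) hz
  -- `dslope ω 0 = ω z / z` has the Taylor coefficients of `ω` shifted down by one.
  have hg0 : dslope ω 0 0 = p.coeff 1 := by rw [dslope_same, hp.deriv]; rfl
  have hg' : deriv (dslope ω 0) 0 = p.coeff 2 := by
    rw [hp.has_fpower_series_dslope_fslope.deriv, ← coeff_fslope]; rfl
  rw [← hg0, ← hg']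
  exact norm_deriv_le_one_sub_sq_of_mapsTo_ball hgd hg

theorem norm_add_real_mul_sq_le_max {a b : ℂ} (h : ‖b‖ ≤ 1 - ‖a‖ ^ 2) (t : ℝ) :
    ‖b + t * a ^ 2‖ ≤ max 1 |t| := by
  have ha : ‖a‖ ^ 2 ≤ 1 := by linarith [norm_nonneg b]
  calc ‖b + t * a ^ 2‖ ≤ ‖b‖ + |t| * ‖a‖ ^ 2 := by
        refine (norm_add_le _ _).trans_eq ?_
        rw [norm_mul, norm_real, Real.norm_eq_abs, norm_pow]
    _ ≤ (1 - ‖a‖ ^ 2) * max 1 |t| + ‖a‖ ^ 2 * max 1 |t| := by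
        nlinarith [le_max_left 1 |t|, le_max_right 1 |t|, sq_nonneg ‖a‖]
    _ = max 1 |t| := by ring

theorem stmt_10_general (s lam : ℝ) (hs0 : 0 < s)
    (ω : ℂ → ℂ) (w d : ℕ → ℂ) (hw0 : w 0 = 0)
    (hsum : ∀ z ∈ Metric.ball (0 : ℂ) 1, Summable fun n => w n * z ^ n)
    (hrep : ∀ z ∈ Metric.ball (0 : ℂ) 1, ω z = ∑' n, w n * z ^ n)
    (hb : ∀ z ∈ Metric.ball (0 : ℂ) 1, ‖ω z‖ < 1)
    (hd2 : d 2 = (s : ℂ) * w 1 / 2)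
    (hd3 : d 3 = ((s : ℂ) / 6) * (w 2 + ((3 * (s : ℂ) + 1) / 2) * w 1 ^ 2)) :
    (lam ≤ (3 * s - 1) / (3 * s) →
      ‖d 3 - (lam : ℂ) * d 2 ^ 2‖ ≤ -((s ^ 2 / 4) * (lam - (3 * s + 1) / (3 * s)))) ∧
    ((3 * s - 1) / (3 * s) ≤ lam ∧ lam ≤ (s + 1) / s →
      ‖d 3 - (lam : ℂ) * d 2 ^ 2‖ ≤ s / 6) ∧
    ((s + 1) / s ≤ lam →
      ‖d 3 - (lam : ℂ) * d 2 ^ 2‖ ≤ (s ^ 2 / 4) * (lam - (3 * s + 1) / (3 * s))) := by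
  have hball : eball (0 : ℂ) 1 = ball 0 1 := by simpa using eball_coe (x := (0 : ℂ)) (ε := 1)
  have hω : HasFPowerSeriesOnBall ω (ofScalars ℂ w) 0 1 :=
    (hasFPowerSeriesOnBall_tsum_ofScalars one_pos (by simpa using hsum)).congr fun z hz =>
      (hrep z (hball ▸ hz)).symm
  have hw : ‖w 2‖ ≤ 1 - ‖w 1‖ ^ 2 := by
    simpa using norm_coeff_two_le_of_mapsTo_ball (hball ▸ hω.differentiableOn)
      hω.hasFPowerSeriesAt (fun z hz => mem_closedBall_zero_iff.mpr (hb z hz).le)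
      (by simpa [hw0] using (hω.coeff_zero fun _ => 0).symm)
  set t : ℝ := (3 * s + 1) / 2 - 3 * lam * s / 2
  have hbound : ‖d 3 - (lam : ℂ) * d 2 ^ 2‖ ≤ s / 6 * max 1 |t| := by
    have hrepr : d 3 - (lam : ℂ) * d 2 ^ 2 = ((s / 6 : ℝ) : ℂ) * (w 2 + t * w 1 ^ 2) := by
      rw [hd2, hd3]; simp only [t]; push_cast; ring
    rw [hrepr, norm_mul, norm_real, Real.norm_of_nonneg (by positivity)]
    exact mul_le_mul_of_nonneg_left (norm_add_real_mul_sq_le_max hw t) (by positivity)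
  have h3s : 0 < 3 * s := by positivity
  refine ⟨fun hlam => ?_, fun ⟨hlam₁, hlam₂⟩ => ?_, fun hlam => ?_⟩
  · have ht : 1 ≤ t := by rw [le_div_iff₀ h3s] at hlam; simp only [t]; nlinarith
    refine hbound.trans_eq ?_
    rw [abs_of_nonneg (by linarith), max_eq_right ht]
    field_simp
    ring
  · have ht : |t| ≤ 1 := by
      rw [div_le_iff₀ h3s] at hlam₁
      rw [le_div_iff₀ hs0] at hlam₂
      simp only [t]
      exact abs_le.mpr ⟨by nlinarith, by nlinarith⟩
    simpa [max_eq_left ht] using hbound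
  · have ht : t ≤ -1 := by rw [div_le_iff₀ hs0] at hlam; simp only [t]; nlinarith
    refine hbound.trans_eq ?_
    rw [abs_of_neg (by linarith), max_eq_right (by linarith)]
    field_simp
    ring

/-- the Fekete–Szegő inequalities for `CV_hpl(s)`, stated (as sanctioned by
the context) via a Schwarz function `ω` with coefficients `w` and
`d₂ = s w₁/2`, `d₃ = (s/6)(w₂ + ((3s+1)/2) w₁²)`. -/
theorem stmt_10 (s lam : ℝ) (hs0 : 0 < s) (hs1 : s ≤ 1)
    (ω : ℂ → ℂ) (w d : ℕ → ℂ) (hw0 : w 0 = 0)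
    (hsum : ∀ z ∈ Metric.ball (0 : ℂ) 1, Summable fun n => w n * z ^ n)
    (hrep : ∀ z ∈ Metric.ball (0 : ℂ) 1, ω z = ∑' n, w n * z ^ n)
    (hb : ∀ z ∈ Metric.ball (0 : ℂ) 1, ‖ω z‖ < 1)
    (hd2 : d 2 = (s : ℂ) * w 1 / 2)
    (hd3 : d 3 = ((s : ℂ) / 6) * (w 2 + ((3 * (s : ℂ) + 1) / 2) * w 1 ^ 2)) :
    (lam ≤ (3 * s - 1) / (3 * s) →
      ‖d 3 - (lam : ℂ) * d 2 ^ 2‖ ≤ -((s ^ 2 / 4) * (lam - (3 * s + 1) / (3 * s)))) ∧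
    ((3 * s - 1) / (3 * s) ≤ lam ∧ lam ≤ (s + 1) / s →
      ‖d 3 - (lam : ℂ) * d 2 ^ 2‖ ≤ s / 6) ∧
    ((s + 1) / s ≤ lam →
      ‖d 3 - (lam : ℂ) * d 2 ^ 2‖ ≤ (s ^ 2 / 4) * (lam - (3 * s + 1) / (3 * s))) :=
  stmt_10_general s lam hs0 ω w d hw0 hsum hrep hb hd2 hd3
end

section
/- Let 0 < s ≤ 1 and h ∈ CV_hpl(s) with inverse h^{-1}(w) = w + ∑_{n≥2} B_n w^n near 0, and λ ∈ ℝ. Then |B₃ − λB₂²| ≤ (s²/4)(λ − (3s−1)/(3s)) if λ ≥ (3s+1)/(3s); ≤ s/6 if (s−1)/s ≤ λ ≤ (3s+1)/(3s); and ≤ (s²/4)((3s−1)/(3s) − λ) if λ ≤ (s−1)/s. -/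
/-!
Put `m = (3s(1 - λ) - 1) / 2`; then `B₃ - λB₂² = -(s/6)(w₂ - m w₁²)`. The Schwarz–Pick lemma
applied to `ω(z)/z` gives `|w₂| ≤ 1 - |w₁|²`, hence `|w₂ - m w₁²| ≤ max 1 |m|`, and the three
ranges of `λ` are exactly `m ≤ -1`, `|m| ≤ 1` and `m ≥ 1`.
-/

open Metric Set FormalMultilinearSeries
open scoped ComplexConjugate NNReal Topology

namespace Complex

noncomputable def blaschkeFactor (a z : ℂ) : ℂ := (z - a) / (1 - conj a * z)

lemma normSq_one_sub_conj_mul_sub_normSq_sub (a z : ℂ) :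
    normSq (1 - conj a * z) - normSq (z - a) = (1 - normSq a) * (1 - normSq z) := by
  simp only [normSq_apply, sub_re, sub_im, one_re, one_im, mul_re, mul_im, conj_re, conj_im]
  ring

lemma norm_sub_lt_norm_one_sub_conj_mul {a z : ℂ} (ha : ‖a‖ < 1) (hz : ‖z‖ < 1) :
    ‖z - a‖ < ‖1 - conj a * z‖ := by
  have ha' : normSq a < 1 := by rw [normSq_eq_norm_sq]; nlinarith [norm_nonneg a]
  have hz' : normSq z < 1 := by rw [normSq_eq_norm_sq]; nlinarith [norm_nonneg z]
  have := normSq_one_sub_conj_mul_sub_normSq_sub a z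
  apply lt_of_pow_lt_pow_left₀ 2 (norm_nonneg _)
  rw [← normSq_eq_norm_sq, ← normSq_eq_norm_sq]
  nlinarith

lemma one_sub_conj_mul_ne_zero {a z : ℂ} (ha : ‖a‖ < 1) (hz : ‖z‖ < 1) :
    1 - conj a * z ≠ 0 := by
  intro h
  have := norm_sub_lt_norm_one_sub_conj_mul ha hz
  rw [h, norm_zero] at this
  exact (norm_nonneg _).not_gt this

lemma norm_blaschkeFactor_lt_one {a z : ℂ} (ha : ‖a‖ < 1) (hz : ‖z‖ < 1) :
    ‖blaschkeFactor a z‖ < 1 := by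
  have := norm_sub_lt_norm_one_sub_conj_mul ha hz
  rw [blaschkeFactor, norm_div, div_lt_one ((norm_nonneg _).trans_lt this)]
  exact this

lemma blaschkeFactor_self (a : ℂ) : blaschkeFactor a a = 0 := by
  simp [blaschkeFactor]

lemma differentiableAt_blaschkeFactor {a z : ℂ} (ha : ‖a‖ < 1) (hz : ‖z‖ < 1) :
    DifferentiableAt ℂ (blaschkeFactor a) z :=
  ((differentiableAt_id.sub_const a).div
    ((differentiableAt_const _).sub (differentiableAt_id.const_mul _))
    (one_sub_conj_mul_ne_zero ha hz))

lemma hasDerivAt_blaschkeFactor_self {a : ℂ} (ha : ‖a‖ < 1) :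
    HasDerivAt (blaschkeFactor a) ((1 - ‖a‖ ^ 2 : ℝ) : ℂ)⁻¹ a := by
  have hne := one_sub_conj_mul_ne_zero ha ha
  have hconj : 1 - conj a * a = ((1 - ‖a‖ ^ 2 : ℝ) : ℂ) := by
    push_cast; rw [mul_comm, mul_conj, normSq_eq_norm_sq]; push_cast; ring
  have := ((hasDerivAt_id' a).sub_const a).div
    (((hasDerivAt_id' a).const_mul (conj a)).const_sub 1) hne
  refine this.congr_deriv ?_
  rw [← hconj]; field_simp; ring

/-- Schwarz–Pick lemma at the origin. -/
theorem norm_deriv_le_one_sub_sq_of_mapsTo_ball {g : ℂ → ℂ}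
    (hd : DifferentiableOn ℂ g (ball 0 1)) (hg : MapsTo g (ball 0 1) (ball 0 1)) :
    ‖deriv g 0‖ ≤ 1 - ‖g 0‖ ^ 2 := by
  -- the Schwarz lemma applied to `blaschkeFactor (g 0) ∘ g`, which fixes the origin
  set a := g 0
  have ha : ‖a‖ < 1 := by simpa using hg (mem_ball_self one_pos)
  have hga : ∀ z ∈ ball (0 : ℂ) 1, ‖g z‖ < 1 := fun z hz => by simpa using hg hz
  have hG : HasDerivAt (blaschkeFactor a ∘ g) (((1 - ‖a‖ ^ 2 : ℝ) : ℂ)⁻¹ * deriv g 0) 0 :=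
    (hasDerivAt_blaschkeFactor_self ha).comp 0
      (hd.differentiableAt (isOpen_ball.mem_nhds (mem_ball_self one_pos))).hasDerivAt
  have hGd : DifferentiableOn ℂ (blaschkeFactor a ∘ g) (ball 0 1) := fun z hz =>
    ((differentiableAt_blaschkeFactor ha (hga z hz)).comp z
      (hd.differentiableAt (isOpen_ball.mem_nhds hz))).differentiableWithinAt
  have hGmaps : MapsTo (blaschkeFactor a ∘ g) (ball 0 1)
      (closedBall ((blaschkeFactor a ∘ g) 0) 1) := fun z hz => by
    rw [Function.comp_apply, Function.comp_apply, blaschkeFactor_self, mem_closedBall,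
      dist_zero_right]
    exact (norm_blaschkeFactor_lt_one ha (hga z hz)).le
  have h := norm_deriv_le_one_of_mapsTo_ball hGd hGmaps one_pos
  have hpos : 0 < 1 - ‖a‖ ^ 2 := by nlinarith [norm_nonneg a]
  rw [hG.deriv, norm_mul, norm_inv, norm_real, Real.norm_of_nonneg hpos.le,
    inv_mul_le_iff₀ hpos, mul_one] at h
  exact h

theorem norm_deriv_le_one_sub_sq_of_mapsTo_closedBall {g : ℂ → ℂ}
    (hd : DifferentiableOn ℂ g (ball 0 1)) (hg : MapsTo g (ball 0 1) (closedBall 0 1)) :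
    ‖deriv g 0‖ ≤ 1 - ‖g 0‖ ^ 2 := by
  -- if `g` reaches the unit circle it is constant by the maximum modulus principle
  by_cases hmax : ∃ z₀ ∈ ball (0 : ℂ) 1, ‖g z₀‖ = 1
  · obtain ⟨z₀, hz₀, hz₀max⟩ := hmax
    have hconst : EqOn g (fun _ => g z₀) (ball 0 1) :=
      eqOn_of_isPreconnected_of_isMaxOn_norm (convex_ball _ _).isPreconnected isOpen_ball hd hz₀
        fun z hz => by simpa [hz₀max] using hg hz
    have h0 : g 0 = g z₀ := hconst (mem_ball_self one_pos)
    have hev : g =ᶠ[𝓝 0] fun _ => g z₀ :=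
      Filter.eventuallyEq_of_mem (isOpen_ball.mem_nhds (mem_ball_self one_pos)) hconst
    rw [hev.deriv_eq, h0, hz₀max]
    simp
  · push Not at hmax
    exact norm_deriv_le_one_sub_sq_of_mapsTo_ball hd fun z hz =>
      mem_ball_zero_iff.2 <| (mem_closedBall_zero_iff.1 (hg hz)).lt_of_ne (hmax z hz)

end Complex

theorem HasFPowerSeriesAt.norm_coeff_two_le_one_sub_sq {ω : ℂ → ℂ}
    {p : FormalMultilinearSeries ℂ ℂ ℂ} (hp : HasFPowerSeriesAt ω p 0)
    (hd : DifferentiableOn ℂ ω (ball 0 1)) (h0 : ω 0 = 0)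
    (hω : MapsTo ω (ball 0 1) (closedBall 0 1)) :
    ‖p.coeff 2‖ ≤ 1 - ‖p.coeff 1‖ ^ 2 := by
  have hslope : HasFPowerSeriesAt (dslope ω 0) p.fslope 0 := hp.has_fpower_series_dslope_fslope
  have hdd : DifferentiableOn ℂ (dslope ω 0) (ball 0 1) :=
    (Complex.differentiableOn_dslope (isOpen_ball.mem_nhds (mem_ball_self one_pos))).2 hd
  have hmaps : MapsTo (dslope ω 0) (ball 0 1) (closedBall 0 1) := fun z hz => by
    simpa using Complex.norm_dslope_le_div_of_mapsTo_ball hd (by rwa [h0]) hz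
  have h := Complex.norm_deriv_le_one_sub_sq_of_mapsTo_closedBall hdd hmaps
  have hd2 : deriv (dslope ω 0) 0 = p.coeff 2 := by rw [← coeff_fslope]; exact hslope.deriv
  have hd1 : dslope ω 0 0 = p.coeff 1 := by rw [dslope_same]; exact hp.deriv
  rwa [hd2, hd1] at h

theorem hasFPowerSeriesOnBall_ofScalars {c : ℕ → ℂ} {f : ℂ → ℂ} {r : ℝ≥0} (hr : 0 < r)
    (hsum : ∀ z ∈ ball (0 : ℂ) r, Summable fun n => c n * z ^ n)
    (hf : ∀ z ∈ ball (0 : ℂ) r, f z = ∑' n, c n * z ^ n) :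
    HasFPowerSeriesOnBall f (ofScalars ℂ c) 0 r := by
  have hrad : (r : ENNReal) ≤ (ofScalars ℂ c).radius := by
    refine ENNReal.le_of_forall_nnreal_lt fun t ht =>
      (ofScalars ℂ c).le_radius_of_tendsto (l := 0) ?_
    have ht' : ((t : ℝ) : ℂ) ∈ ball (0 : ℂ) r := by simpa using ht
    simpa [ofScalars_norm, norm_mul] using (hsum _ ht').tendsto_atTop_zero.norm
  have hr' : (0 : ENNReal) < r := ENNReal.coe_pos.2 hr
  refine ((ofScalars ℂ c).hasFPowerSeriesOnBall (hr'.trans_le hrad)).mono hr' hrad |>.congr ?_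
  intro z hz
  rw [Metric.eball_coe] at hz
  rw [hf z hz]
  exact (ofScalars_sum_eq c z).trans (by simp only [smul_eq_mul])

theorem norm_sub_mul_sq_le_max_one {a b μ : ℂ} (h : ‖b‖ ≤ 1 - ‖a‖ ^ 2) :
    ‖b - μ * a ^ 2‖ ≤ max 1 ‖μ‖ :=
  calc ‖b - μ * a ^ 2‖ ≤ ‖b‖ + ‖μ‖ * ‖a‖ ^ 2 := by
        rw [← norm_pow, ← norm_mul]; exact norm_sub_le _ _
    _ ≤ (1 - ‖a‖ ^ 2) * max 1 ‖μ‖ + ‖a‖ ^ 2 * max 1 ‖μ‖ := by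
        have ha : ‖a‖ ^ 2 ≤ 1 := by linarith [norm_nonneg b]
        nlinarith [le_max_left 1 ‖μ‖, le_max_right 1 ‖μ‖, sq_nonneg ‖a‖]
    _ = max 1 ‖μ‖ := by ring

theorem stmt_16_general (s lam : ℝ) (hs0 : 0 < s)
    (ω : ℂ → ℂ) (w d B : ℕ → ℂ) (hw0 : w 0 = 0)
    (hsum : ∀ z ∈ Metric.ball (0 : ℂ) 1, Summable fun n => w n * z ^ n)
    (hrep : ∀ z ∈ Metric.ball (0 : ℂ) 1, ω z = ∑' n, w n * z ^ n)
    (hb : ∀ z ∈ Metric.ball (0 : ℂ) 1, ‖ω z‖ < 1)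
    (hd2 : d 2 = (s : ℂ) * w 1 / 2)
    (hd3 : d 3 = ((s : ℂ) / 6) * (w 2 + ((3 * (s : ℂ) + 1) / 2) * w 1 ^ 2))
    (hB2 : B 2 = -d 2) (hB3 : B 3 = 2 * d 2 ^ 2 - d 3) :
    ((3 * s + 1) / (3 * s) ≤ lam →
      ‖B 3 - (lam : ℂ) * B 2 ^ 2‖ ≤ (s ^ 2 / 4) * (lam - (3 * s - 1) / (3 * s))) ∧
    ((s - 1) / s ≤ lam ∧ lam ≤ (3 * s + 1) / (3 * s) →
      ‖B 3 - (lam : ℂ) * B 2 ^ 2‖ ≤ s / 6) ∧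
    (lam ≤ (s - 1) / s →
      ‖B 3 - (lam : ℂ) * B 2 ^ 2‖ ≤ (s ^ 2 / 4) * ((3 * s - 1) / (3 * s) - lam)) := by
  have hω : HasFPowerSeriesOnBall ω (ofScalars ℂ w) 0 (1 : ℝ≥0) :=
    hasFPowerSeriesOnBall_ofScalars one_pos (by simpa using hsum) (by simpa using hrep)
  have hωd : DifferentiableOn ℂ ω (ball 0 1) := by
    simpa only [Metric.eball_coe, NNReal.coe_one] using hω.differentiableOn
  have hω0 : ω 0 = 0 := by
    rw [hrep 0 (mem_ball_self one_pos), tsum_eq_single 0 fun n hn => by simp [hn]]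
    simp [hw0]
  have hschwarz : ‖w 2‖ ≤ 1 - ‖w 1‖ ^ 2 := by
    simpa using hω.hasFPowerSeriesAt.norm_coeff_two_le_one_sub_sq hωd hω0
      fun z hz => by simpa using (hb z hz).le
  set m : ℝ := (3 * s * (1 - lam) - 1) / 2 with hm
  have hFS : ‖B 3 - (lam : ℂ) * B 2 ^ 2‖ ≤ s / 6 * max 1 |m| := by
    have hB : B 3 - (lam : ℂ) * B 2 ^ 2 = -((s / 6 : ℝ) : ℂ) * (w 2 - (m : ℂ) * w 1 ^ 2) := by
      rw [hB3, hB2, hd2, hd3, hm]; push_cast; ring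
    rw [hB, norm_mul, norm_neg, Complex.norm_real, Real.norm_of_nonneg (by positivity)]
    simpa using mul_le_mul_of_nonneg_left (norm_sub_mul_sq_le_max_one (μ := m) hschwarz)
      (by positivity : 0 ≤ s / 6)
  refine ⟨fun hlam => ?_, fun ⟨hlo, hhi⟩ => ?_, fun hlam => ?_⟩
  · have hm1 : m ≤ -1 := by
      rw [div_le_iff₀ (by positivity)] at hlam; rw [hm]; nlinarith
    refine hFS.trans_eq ?_
    rw [abs_of_neg (by linarith), max_eq_right (by linarith), hm]
    field_simp; ring
  · have hm1 : |m| ≤ 1 := by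
      rw [div_le_iff₀ hs0] at hlo; rw [le_div_iff₀ (by positivity)] at hhi
      rw [abs_le, hm]; constructor <;> nlinarith
    simpa [max_eq_left hm1] using hFS
  · have hm1 : 1 ≤ m := by
      rw [le_div_iff₀ hs0] at hlam; rw [hm]; nlinarith
    refine hFS.trans_eq ?_
    rw [abs_of_pos (by linarith), max_eq_right hm1, hm]
    field_simp; ring

/-- Fekete–Szegő inequalities for inverse coefficients in `CV_hpl(s)`,
stated (as sanctioned by the context) via a Schwarz function `ω` with coefficients `w`,
`d₂ = s w₁/2`, `d₃ = (s/6)(w₂ + ((3s+1)/2)w₁²)`, `B₂ = -d₂`, `B₃ = 2d₂² - d₃`. -/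
theorem stmt_16 (s lam : ℝ) (hs0 : 0 < s) (hs1 : s ≤ 1)
    (ω : ℂ → ℂ) (w d B : ℕ → ℂ) (hw0 : w 0 = 0)
    (hsum : ∀ z ∈ Metric.ball (0 : ℂ) 1, Summable fun n => w n * z ^ n)
    (hrep : ∀ z ∈ Metric.ball (0 : ℂ) 1, ω z = ∑' n, w n * z ^ n)
    (hb : ∀ z ∈ Metric.ball (0 : ℂ) 1, ‖ω z‖ < 1)
    (hd2 : d 2 = (s : ℂ) * w 1 / 2)
    (hd3 : d 3 = ((s : ℂ) / 6) * (w 2 + ((3 * (s : ℂ) + 1) / 2) * w 1 ^ 2))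
    (hB2 : B 2 = -d 2) (hB3 : B 3 = 2 * d 2 ^ 2 - d 3) :
    ((3 * s + 1) / (3 * s) ≤ lam →
      ‖B 3 - (lam : ℂ) * B 2 ^ 2‖ ≤ (s ^ 2 / 4) * (lam - (3 * s - 1) / (3 * s))) ∧
    ((s - 1) / s ≤ lam ∧ lam ≤ (3 * s + 1) / (3 * s) →
      ‖B 3 - (lam : ℂ) * B 2 ^ 2‖ ≤ s / 6) ∧
    (lam ≤ (s - 1) / s →
      ‖B 3 - (lam : ℂ) * B 2 ^ 2‖ ≤ (s ^ 2 / 4) * ((3 * s - 1) / (3 * s) - lam)) :=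
  stmt_16_general s lam hs0 ω w d B hw0 hsum hrep hb hd2 hd3 hB2 hB3
end
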